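/- Let n ≥ 2 and let λ be a partition of n whose first part satisfies 2·λ_1 ≥ n−1. Assume that λ is not the partition (n/2, n/2) when n is even, and that λ does not have exactly three parts with first part equal to (n−1)/2 when n is odd. Then |η_λ| ≤ (n−λ_1+1)·D_{λ_1} + D_{λ_1−1}. -/

import Mathlib

/-!
Renteln's recurrence gives `|η_λ| ≤ |η_{λ-ĥ}| + h |η_{λ-ĉ}|`. Iterating it yields the crude
bound `|η_μ| ≤ D_{|μ|}` (the columns `1^m`, where `η = ±(m-1)`, being checked separately), which
we use for `λ-ĥ`. Deleting the first column keeps `λ`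
within the hypotheses of the theorem (with first part `λ₁ - 1`), so induction on `λ₁` bounds
`|η_{λ-ĉ}|`. The two estimates combine into the claimed one through an inequality between
derangement numbers, which the recurrence for `D` proves once `λ₁ ≥ 6` and a finite check
settles below that, except for seven small partitions where `η_λ` is computed directly.
-/

/-- Derangement numbers: `D 0 = 1`, `D (m+1) = (m+1) * D m + (-1)^(m+1)`. -/
def derange : ℕ → ℤ
  | 0 => 1
  | n + 1 => (n + 1 : ℤ) * derange n + (-1) ^ (n + 1)

/-- Subtract one from every part and discard the parts that become zero
(deleting the first column of the Ferrers diagram). -/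
def strip (l : List ℕ) : List ℕ := (l.map (· - 1)).filter (fun x => 0 < x)

lemma strip_measure (l : List ℕ) : (strip l).sum + (strip l).length ≤ l.sum := by
  induction l with
  | nil => simp [strip]
  | cons x t ih =>
      simp only [strip, List.map_cons, List.filter_cons] at ih ⊢
      by_cases hx : 0 < x - 1 <;> simp [hx] <;> omega

/-- The eigenvalues of the derangement graph, defined by Renteln's recurrence:
`η ∅ = 1` and `η λ = (-1)^h (η (λ-ĥ) + (-1)^{λ₁} h η (λ-ĉ))`, where
`h = λ₁ + r - 1` is the hook size, `λ-ĥ = strip (tail λ)` removes the hook,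
and `λ-ĉ = strip λ` removes the first column. -/
def eta : List ℕ → ℤ
  | [] => 1
  | a :: t =>
      (-1) ^ (a + t.length) *
        (eta (strip t) + (-1) ^ a * ((a : ℤ) + t.length) * eta (strip (a :: t)))
  termination_by l => l.sum + l.length
  decreasing_by
  · have h1 := strip_measure t
    simp only [List.sum_cons, List.length_cons]
    omega
  · have h1 := strip_measure (a :: t)
    simp only [List.sum_cons, List.length_cons] at h1 ⊢
    omega

/-- `l` is (the list of parts of) a partition of `n`: weakly decreasing,
all parts positive, summing to `n`. -/
def IsPartition (n : ℕ) (l : List ℕ) : Prop :=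
  l.Pairwise (· ≥ ·) ∧ (∀ x ∈ l, 0 < x) ∧ l.sum = n

/-- The hook partition `(a, 1^(n-a))` of `n`. -/
def hookP (n a : ℕ) : List ℕ := a :: List.replicate (n - a) 1


theorem derange_eq_numDerangements (n : ℕ) : derange n = numDerangements n := by
  induction n with
  | zero => rfl
  | succ n ih => rw [derange, numDerangements_succ, ih, pow_succ]; ring

theorem derange_nonneg (n : ℕ) : 0 ≤ derange n := by
  rw [derange_eq_numDerangements]; positivity

theorem mul_derange_le_derange_succ (n : ℕ) : n * derange n ≤ derange (n + 1) := by
  rcases n with _ | m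
  · simp [derange]
  · rw [derange_eq_numDerangements, derange_eq_numDerangements, numDerangements_add_two]
    push_cast
    nlinarith [Int.natCast_nonneg (numDerangements m), Int.natCast_nonneg m]

theorem one_le_derange : ∀ {n : ℕ}, n ≠ 1 → 1 ≤ derange n
  | 0, _ => le_rfl
  | 1, h => absurd rfl h
  | 2, _ => by decide
  | m + 3, _ => by
    have hD := one_le_derange (n := m + 2) (by omega)
    have hstep := mul_derange_le_derange_succ (m + 2)
    push_cast at hstep
    nlinarith

theorem derange_mono {m n : ℕ} (hmn : m ≤ n) (hn : n ≠ 1) : derange m ≤ derange n := by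
  rcases m with _ | m
  · exact one_le_derange hn
  · have hstep : ∀ j ≥ 1, derange j ≤ derange (j + 1) := fun j hj => by
      have := mul_derange_le_derange_succ j
      nlinarith [derange_nonneg j, (Nat.one_le_cast (α := ℤ)).2 hj]
    exact monotoneOn_nat_Ici_of_le_succ hstep (Set.mem_Ici.2 (by omega))
      (Set.mem_Ici.2 (by omega)) hmn

theorem sub_one_le_derange (n : ℕ) : (n : ℤ) - 1 ≤ derange n := by
  rcases n with _ | m
  · simp [derange]
  rcases eq_or_ne m 1 with rfl | hm
  · decide
  · have := mul_derange_le_derange_succ m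
    push_cast
    nlinarith [one_le_derange hm, Int.natCast_nonneg m]

theorem add_add_one_mul_derange_le {q r : ℕ} (hq : 2 ≤ q) (hr : 2 ≤ r) :
    ((q + r + 1 : ℕ) : ℤ) * derange q ≤ derange (q + r) := by
  obtain ⟨j, rfl⟩ : ∃ j, r = j + 2 := ⟨r - 2, by omega⟩
  have hq' : (2 : ℤ) ≤ q := by exact_mod_cast hq
  calc ((q + (j + 2) + 1 : ℕ) : ℤ) * derange q
      ≤ ((q + j + 1 : ℕ) : ℤ) * (q * derange q) := by
        rw [← mul_assoc]
        refine mul_le_mul_of_nonneg_right ?_ (derange_nonneg q)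
        push_cast
        nlinarith [Int.natCast_nonneg j]
    _ ≤ ((q + j + 1 : ℕ) : ℤ) * derange (q + 1) := by
        gcongr; exact mul_derange_le_derange_succ q
    _ ≤ ((q + j + 1 : ℕ) : ℤ) * derange (q + j + 1) := by
        gcongr; exact derange_mono (by omega) (by omega)
    _ ≤ derange (q + (j + 2)) := mul_derange_le_derange_succ (q + j + 1)

theorem derange_sub_add_mul_derange_sub_le {n h r : ℕ} (hr : 2 ≤ r) (hrh : r ≤ h) (hhn : h ≤ n)
    (hrn : r < n) : derange (n - h) + h * derange (n - r) ≤ derange n := by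
  rcases (show n - r = 1 ∨ 2 ≤ n - r by omega) with hq | hq
  · rw [hq, show derange 1 = 0 from rfl, mul_zero, add_zero]
    exact derange_mono (by omega) (by omega)
  · have hmono : derange (n - h) ≤ derange (n - r) := derange_mono (by omega) (by omega)
    have hstep := add_add_one_mul_derange_le hq hr
    rw [Nat.sub_add_cancel hrn.le] at hstep
    push_cast at hstep
    have hh : (h : ℤ) ≤ n := by exact_mod_cast hhn
    nlinarith [derange_nonneg (n - r)]

theorem strip_cons_of_two_le {a : ℕ} (ha : 2 ≤ a) (t : List ℕ) :
    strip (a :: t) = (a - 1) :: strip t := by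
  simp [strip, show 0 < a - 1 by omega]

theorem strip_replicate_one (n : ℕ) : strip (List.replicate n 1) = [] := by
  simp [strip, List.map_replicate]

theorem pos_of_mem_strip {l : List ℕ} {x : ℕ} (hx : x ∈ strip l) : 0 < x := by
  simpa [strip] using (List.mem_filter.1 hx).2

theorem pairwise_strip {l : List ℕ} (h : l.Pairwise (· ≥ ·)) : (strip l).Pairwise (· ≥ ·) :=
  (List.pairwise_map.2 (h.imp fun hab => Nat.sub_le_sub_right hab 1)).filter _

theorem sum_strip_add_length {l : List ℕ} (hpos : ∀ x ∈ l, 0 < x) :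
    (strip l).sum + l.length = l.sum := by
  induction l with
  | nil => rfl
  | cons x t ih =>
    have hx := hpos x List.mem_cons_self
    have ht := ih fun y hy => hpos y (List.mem_cons_of_mem _ hy)
    rcases (show x = 1 ∨ 2 ≤ x by omega) with rfl | hx2
    · have hone : strip (1 :: t) = strip t := by simp [strip]
      simp only [hone, List.length_cons, List.sum_cons]
      omega
    · rw [strip_cons_of_two_le hx2]
      simp only [List.sum_cons, List.length_cons]
      omega

theorem length_lt_sum_of_ne_replicate {l : List ℕ} (hpos : ∀ x ∈ l, 0 < x)
    (hl : l ≠ List.replicate l.length 1) : l.length < l.sum := by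
  induction l with
  | nil => exact absurd rfl hl
  | cons x t ih =>
    have hx := hpos x List.mem_cons_self
    have htpos : ∀ y ∈ t, 0 < y := fun y hy => hpos y (List.mem_cons_of_mem _ hy)
    simp only [List.length_cons, List.sum_cons, List.replicate_succ] at hl ⊢
    rcases (show x = 1 ∨ 2 ≤ x by omega) with rfl | hx2
    · have := ih htpos fun h => hl (by rw [← h])
      omega
    · have := List.length_le_sum_of_one_le t htpos
      omega

theorem eta_cons (a : ℕ) (t : List ℕ) :
    eta (a :: t) = (-1) ^ (a + t.length) *
      (eta (strip t) + (-1) ^ a * ((a : ℤ) + t.length) * eta (strip (a :: t))) := by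
  rw [eta]

theorem abs_eta_cons_le (a : ℕ) (t : List ℕ) :
    |eta (a :: t)| ≤ |eta (strip t)| + (a + t.length) * |eta (strip (a :: t))| := by
  rw [eta_cons, abs_mul, abs_pow, abs_neg, abs_one, one_pow, one_mul]
  refine (abs_add_le _ _).trans ?_
  rw [abs_mul, abs_mul, abs_pow, abs_neg, abs_one, one_pow, one_mul,
    abs_of_nonneg (by positivity : (0 : ℤ) ≤ a + t.length)]

theorem eta_singleton (a : ℕ) : eta [a] = derange a := by
  induction a with
  | zero => simp [eta, strip, derange]
  | succ a ih =>
    have hstrip : eta (strip [a + 1]) = derange a := by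
      rcases a with _ | a
      · simp [eta, strip, derange]
      · rw [strip_cons_of_two_le (by omega), ← ih]; rfl
    rw [eta_cons, hstrip, derange]
    simp only [strip, List.map_nil, List.filter_nil, List.length_nil, eta]
    push_cast
    have hsq : ((-1 : ℤ) ^ (a + 1)) ^ 2 = 1 := by
      rw [← pow_mul]; exact Even.neg_one_pow ⟨a + 1, by ring⟩
    linear_combination ((a : ℤ) + 1) * derange a * hsq

theorem eta_replicate_one (n : ℕ) : eta (List.replicate n 1) = (-1) ^ (n + 1) * ((n : ℤ) - 1) := by
  rcases n with _ | m
  · simp [eta]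
  · rw [List.replicate_succ, eta_cons, ← List.replicate_succ, strip_replicate_one,
      strip_replicate_one]
    simp [eta, pow_succ]
    ring

theorem abs_eta_replicate_one_le (n : ℕ) : |eta (List.replicate n 1)| ≤ derange n := by
  rw [eta_replicate_one, abs_mul, abs_pow, abs_neg, abs_one, one_pow, one_mul]
  rcases n with _ | n
  · simp [derange]
  · rw [abs_of_nonneg (by simp)]
    exact sub_one_le_derange _

theorem abs_eta_le_derange_sum : ∀ (l : List ℕ), (∀ x ∈ l, 0 < x) → |eta l| ≤ derange l.sum
  | [], _ => by simp [eta, derange]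
  | [a], _ => by simp [eta_singleton, abs_of_nonneg (derange_nonneg a)]
  | a :: b :: t, hpos => by
    by_cases hrep : a :: b :: t = List.replicate (a :: b :: t).length 1
    · rw [hrep, List.sum_replicate, smul_eq_mul, mul_one]
      exact abs_eta_replicate_one_le _
    have hbt : ∀ x ∈ b :: t, 0 < x := fun x hx => hpos x (List.mem_cons_of_mem _ hx)
    have hsum := sum_strip_add_length hpos
    have htail := sum_strip_add_length hbt
    have hlen := length_lt_sum_of_ne_replicate hpos hrep
    have hk := List.length_le_sum_of_one_le _ hbt
    have ha := hpos a List.mem_cons_self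
    simp only [List.length_cons, List.sum_cons] at hsum htail hlen hk ⊢
    set s := t.sum
    set k := t.length
    calc |eta (a :: b :: t)|
        ≤ |eta (strip (b :: t))| + (a + (k + 1 : ℕ)) * |eta (strip (a :: b :: t))| :=
          abs_eta_cons_le a (b :: t)
      _ ≤ derange (strip (b :: t)).sum +
            ((a + (k + 1) : ℕ) : ℤ) * derange (strip (a :: b :: t)).sum := by
          push_cast
          gcongr <;> exact abs_eta_le_derange_sum _ fun _ => pos_of_mem_strip
      _ = derange ((a + (b + s)) - (a + (k + 1))) +
            ((a + (k + 1) : ℕ) : ℤ) * derange ((a + (b + s)) - (k + 1 + 1)) := by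
          congr 3 <;> omega
      _ ≤ derange (a + (b + s)) := derange_sub_add_mul_derange_sub_le (by omega) (by omega)
          (by omega) (by omega)
termination_by l => l.sum + l.length
decreasing_by
  all_goals
    have := strip_measure (a :: b :: t)
    have := strip_measure (b :: t)
    simp only [List.sum_cons, List.length_cons] at *
    omega

def etaBound (a s : ℕ) : ℤ := (s + 1) * derange a + derange (a - 1)

theorem derange_add_mul_etaBound_le_of_six_le {a s k : ℕ} (ha : 6 ≤ a) (hk : 1 ≤ k)
    (hks : k ≤ s) (hsk : s - k + 2 ≤ a) :
    derange (s - k) + (a + k) * etaBound (a - 1) (s - k) ≤ etaBound a s := by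
  obtain ⟨b, rfl⟩ : ∃ b, a = b + 2 := ⟨a - 2, by omega⟩
  obtain ⟨m, rfl⟩ : ∃ m, s = m + k := ⟨s - k, by omega⟩
  simp only [etaBound, Nat.add_sub_cancel, show b + 2 - 1 = b + 1 by omega]
  set ε : ℤ := (-1) ^ (b + 1)
  have hb1 : derange (b + 1) = (b + 1) * derange b + ε := by simp [derange, ε]
  have hb2 : derange (b + 2) = (b + 2) * derange (b + 1) - ε := by
    rw [derange, pow_succ]; push_cast; ring
  have hε : ε = 1 ∨ ε = -1 := neg_one_pow_eq_or ℤ _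
  have hm : derange m ≤ derange b := derange_mono (by omega) (by omega)
  have h9 : 9 ≤ derange b := derange_mono (m := 4) (by omega) (by omega)
  have hmb : (m : ℤ) ≤ b := by exact_mod_cast (show m ≤ b by omega)
  have hkb : (1 : ℤ) ≤ k := by exact_mod_cast hk
  have hb4 : (4 : ℤ) ≤ b := by exact_mod_cast (show 4 ≤ b by omega)
  set c : ℤ := (k * (b + 1 - m) + 1) * (b + 1) - (b + k + 2)
  have hkj : (k : ℤ) ≤ k * (b + 1 - m) := by nlinarith
  have hkjb : (b : ℤ) ≤ k * (b + 1 - m) * b := by nlinarith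
  have hc : (c - 1) * 9 ≤ (c - 1) * derange b :=
    mul_le_mul_of_nonneg_left h9 (by nlinarith : (0 : ℤ) ≤ c - 1)
  have hgap : ((m + k : ℕ) + 1 : ℤ) * derange (b + 2) + derange (b + 1)
      - (derange m + ((b + 2 : ℕ) + k) * ((m + 1) * derange (b + 1) + derange b))
      = c * derange b - derange m + ε * (k * (b - m) - m) := by
    rw [hb2, hb1]; push_cast; ring
  rcases hε with hε | hε <;> rw [hε] at hgap <;> nlinarith

def shapeData (l : List ℕ) : ℕ × ℕ × ℕ := (l.headI, l.tail.sum, l.tail.length)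

-- The partitions realizing the shapes at which the recursive estimate below is too weak.
def exceptionalPartitions : List (List ℕ) :=
  [[2, 1], [2, 1, 1], [2, 1, 1, 1], [3, 2], [3, 2, 1], [3, 2, 1, 1], [5, 4]]

theorem abs_eta_le_etaBound_of_mem_exceptional :
    ∀ l ∈ exceptionalPartitions, |eta l| ≤ etaBound l.headI l.tail.sum := by
  simp only [exceptionalPartitions, List.forall_mem_cons, List.not_mem_nil, IsEmpty.forall_iff,
    implies_true, and_true]
  norm_num [eta, strip, etaBound, derange]

theorem mem_exceptionalPartitions_of_shapeData_mem {a : ℕ} {t : List ℕ}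
    (hsort : t.Pairwise (· ≥ ·)) (hpos : ∀ x ∈ t, 0 < x)
    (h : shapeData (a :: t) ∈ exceptionalPartitions.map shapeData) :
    a :: t ∈ exceptionalPartitions := by
  match t, hsort, hpos, h with
  | [], _, _, h | [_], _, _, h | [_, _], hsort, hpos, h | [_, _, _], hsort, hpos, h =>
    simp [shapeData, exceptionalPartitions] at hsort hpos h ⊢ <;> omega
  | _ :: _ :: _ :: _ :: _, _, _, h =>
    simp [shapeData, exceptionalPartitions] at h

theorem derange_add_mul_etaBound_le {a s k : ℕ} (hk : 1 ≤ k) (hks : k ≤ s) (hsa : s ≤ a + 1)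
    (h1 : k = 1 → s < a) (h2 : k = 2 → s ≤ a)
    (hex : (a, s, k) ∉ exceptionalPartitions.map shapeData) :
    derange (s - k) + (a + k) * etaBound (a - 1) (s - k) ≤ etaBound a s := by
  rcases lt_or_ge a 6 with ha | ha
  · interval_cases a <;> interval_cases s <;> interval_cases k <;> revert h1 h2 hex <;> decide
  · exact derange_add_mul_etaBound_le_of_six_le ha hk hks (by omega)

-- `a :: t` satisfies the hypotheses of `eta_abs_upper_bound`, written in terms of `s = n - λ₁`.
structure Admissible (a : ℕ) (t : List ℕ) : Prop where
  sorted : (a :: t).Pairwise (· ≥ ·)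
  pos : ∀ x ∈ t, 0 < x
  sum_le : t.sum ≤ a + 1
  sum_lt_of_length_eq_one : t.length = 1 → t.sum < a
  sum_le_of_length_eq_two : t.length = 2 → t.sum ≤ a

namespace Admissible

variable {a : ℕ} {t : List ℕ}

theorem two_le (h : Admissible a t) (ht : t ≠ []) : 2 ≤ a := by
  obtain ⟨-, hpos, hs, h1, h2⟩ := h
  have := List.length_le_sum_of_one_le t hpos
  have := List.length_pos_of_ne_nil ht
  omega

theorem stripped (h : Admissible a t) (ht : t ≠ []) : Admissible (a - 1) (strip t) := by
  have ha := h.two_le ht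
  obtain ⟨hsort, hpos, hs, h1, h2⟩ := h
  have hsum := sum_strip_add_length hpos
  have hk := List.length_pos_of_ne_nil ht
  refine ⟨?_, fun _ => pos_of_mem_strip, by omega, fun _ => by omega, fun _ => by omega⟩
  rw [← strip_cons_of_two_le ha]
  exact pairwise_strip hsort

theorem abs_eta_le (h : Admissible a t) : |eta (a :: t)| ≤ etaBound a t.sum := by
  induction a using Nat.strong_induction_on generalizing t with
  | _ a ih =>
  rcases eq_or_ne t [] with rfl | ht
  · simp [eta_singleton, etaBound, abs_of_nonneg (derange_nonneg a), derange_nonneg]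
  by_cases hex : shapeData (a :: t) ∈ exceptionalPartitions.map shapeData
  · exact abs_eta_le_etaBound_of_mem_exceptional _
      (mem_exceptionalPartitions_of_shapeData_mem h.sorted.of_cons h.pos hex)
  have ha := h.two_le ht
  have hsum := sum_strip_add_length h.pos
  have hcol := ih (a - 1) (by omega) (h.stripped ht)
  have hhook := abs_eta_le_derange_sum (strip t) fun _ => pos_of_mem_strip
  rw [← strip_cons_of_two_le ha] at hcol
  rw [show (strip t).sum = t.sum - t.length by omega] at hcol hhook
  calc |eta (a :: t)| ≤ |eta (strip t)| + (a + t.length) * |eta (strip (a :: t))| :=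
        abs_eta_cons_le a t
    _ ≤ derange (t.sum - t.length) + (a + t.length) * etaBound (a - 1) (t.sum - t.length) := by
        gcongr
    _ ≤ etaBound a t.sum :=
        derange_add_mul_etaBound_le (List.length_pos_of_ne_nil ht)
          (List.length_le_sum_of_one_le t h.pos) h.sum_le h.sum_lt_of_length_eq_one
          h.sum_le_of_length_eq_two hex

end Admissible

theorem eta_abs_upper_bound_general (n : ℕ)
    (l : List ℕ) (hl : IsPartition n l) (h1 : n - 1 ≤ 2 * l.headI)
    (he : Even n → l ≠ [n / 2, n / 2])
    (ho : Odd n → ¬(l.length = 3 ∧ l.headI = (n - 1) / 2)) :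
    |eta l| ≤ ((n - l.headI + 1 : ℕ) : ℤ) * derange l.headI + derange (l.headI - 1) := by
  obtain ⟨hsort, hpos, rfl⟩ := hl
  rcases l with _ | ⟨a, t⟩
  · simp [eta, derange]
  simp only [List.headI_cons, List.sum_cons, List.length_cons] at *
  have hadm : Admissible a t :=
    { sorted := hsort
      pos := fun x hx => hpos x (List.mem_cons_of_mem a hx)
      sum_le := by omega
      sum_lt_of_length_eq_one := fun hlen => by
        obtain ⟨b, rfl⟩ := List.length_eq_one_iff.1 hlen
        have hba : b ≤ a := by simpa using hsort
        have hne : b ≠ a := by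
          rintro rfl
          exact he ⟨b, by simp⟩ (by simp; omega)
        simp only [List.sum_cons, List.sum_nil]
        omega
      sum_le_of_length_eq_two := fun hlen => by
        by_contra hlt
        exact ho ⟨a, by omega⟩ ⟨by omega, by omega⟩ }
  rw [show a + t.sum - a + 1 = t.sum + 1 by omega]
  simpa [etaBound] using hadm.abs_eta_le

/-- For `n ≥ 2` and `λ ⊢ n` with `2λ₁ ≥ n-1`, excluding `(n/2, n/2)` for even `n` and
three-part partitions with first part `(n-1)/2` for odd `n`:
`|η_λ| ≤ (n-λ₁+1) D_{λ₁} + D_{λ₁-1}`. -/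
theorem eta_abs_upper_bound (n : ℕ) (hn : 2 ≤ n)
    (l : List ℕ) (hl : IsPartition n l) (h1 : n - 1 ≤ 2 * l.headI)
    (he : Even n → l ≠ [n / 2, n / 2])
    (ho : Odd n → ¬(l.length = 3 ∧ l.headI = (n - 1) / 2)) :
    |eta l| ≤ ((n - l.headI + 1 : ℕ) : ℤ) * derange l.headI + derange (l.headI - 1) :=
  eta_abs_upper_bound_general n l hl h1 he ho
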